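/- For each n ≥ 0, the composite functor 𝒫₀([n]) ≅ PΔ[n] → Δ_res^{≤n} ⊂ Δ^{≤n} is left cofinal (homotopy initial), where 𝒫₀([n]) is the poset of nonempty subsets of [n], PΔ[n] is the poset of non-degenerate simplices of the standard n-simplex Δ[n], and Δ_res^{≤n} is the subcategory of Δ^{≤n} containing only the injective maps. -/

import Mathlib

/-!
The poset `𝒫₀([n])` of nonempty subsets of `[n]`, its canonical functor to the
truncated simplex category `Δ≤n` (factoring through the subcategory `Δ_res^{≤n}`
of injective maps, and corresponding to the poset `PΔ[n]` of non-degenerate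
simplices of the standard `n`-simplex under the isomorphism `𝒫₀([n]) ≅ PΔ[n]`),
and the notion of a left cofinal (homotopy initial) functor, encoded via
contractibility of the nerves of the comma categories.
-/

open CategoryTheory CategoryTheory.Limits Simplicial

namespace StabilizationPaper

/-- the poset `𝒫₀([n])` of nonempty subsets of `[n] = {0, 1, …, n}`, ordered by
inclusion; under the correspondence sending a nonempty subset to the
non-degenerate simplex it spans, it is isomorphic to the poset `PΔ[n]` of
non-degenerate simplices of the standard `n`-simplex `Δ[n]`. -/
def NEP (n : ℕ) : Type := {A : Finset (Fin (n + 1)) // A.Nonempty}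

instance (n : ℕ) : PartialOrder (NEP n) := by unfold NEP; infer_instance

/-- the order-preserving map `Fin T.card → Fin T'.card` induced by an inclusion
`T ⊆ T'` of finite sets of integers (the "face" inclusion of the simplices they
span) -/
def restrictEmb {n : ℕ} {T T' : Finset (Fin (n + 1))} (h : T ⊆ T') :
    Fin T.card →o Fin T'.card where
  toFun i := (T'.orderIsoOfFin rfl).symm
    ⟨T.orderEmbOfFin rfl i, h (T.orderEmbOfFin_mem rfl i)⟩
  monotone' i j hij := (T'.orderIsoOfFin rfl).symm.monotone
    (Subtype.mk_le_mk.mpr ((T.orderEmbOfFin rfl).monotone hij))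

lemma restrictEmb_refl {n : ℕ} {T : Finset (Fin (n + 1))} (h : T ⊆ T) (i : Fin T.card) :
    restrictEmb h i = i := by
  show (T.orderIsoOfFin rfl).symm _ = i
  rw [OrderIso.symm_apply_eq]
  exact Subtype.ext (T.coe_orderIsoOfFin_apply rfl i).symm

lemma orderEmbOfFin_symm_apply {n : ℕ} (s : Finset (Fin (n + 1))) (x : {a // a ∈ s}) :
    s.orderEmbOfFin rfl ((s.orderIsoOfFin rfl).symm x) = ↑x := by
  rw [← s.coe_orderIsoOfFin_apply rfl, OrderIso.apply_symm_apply]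

lemma restrictEmb_trans {n : ℕ} {T T' T'' : Finset (Fin (n + 1))}
    (h : T ⊆ T') (h' : T' ⊆ T'') (h'' : T ⊆ T'') (i : Fin T.card) :
    restrictEmb h' (restrictEmb h i) = restrictEmb h'' i := by
  show (T''.orderIsoOfFin rfl).symm _ = (T''.orderIsoOfFin rfl).symm _
  congr 1
  exact Subtype.ext (orderEmbOfFin_symm_apply T' _)

/-- the order-preserving map underlying `toTrunc` on morphisms -/
def truncHom {n : ℕ} {T T' : NEP n} (h : T.1 ⊆ T'.1) :
    Fin (T.1.card - 1 + 1) →o Fin (T'.1.card - 1 + 1) where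
  toFun i := Fin.cast (Nat.succ_pred_eq_of_pos T'.2.card_pos).symm
    (restrictEmb h (Fin.cast (Nat.succ_pred_eq_of_pos T.2.card_pos) i))
  monotone' i j hij := by
    have h1 : Fin.cast (Nat.succ_pred_eq_of_pos T.2.card_pos) i ≤
        Fin.cast (Nat.succ_pred_eq_of_pos T.2.card_pos) j := by
      simpa only [Fin.le_def, Fin.coe_cast] using hij
    have h2 := (restrictEmb h).monotone h1
    simpa only [Fin.le_def, Fin.coe_cast] using h2

/-- The composite functor `𝒫₀([n]) ≅ PΔ[n] ⟶ Δ_res^{≤n} ⊂ Δ^{≤n}`: a nonempty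
subset `T ⊆ [n]` is sent to `[T.card − 1]`, and an inclusion `T ⊆ T'` to the
corresponding injective order-preserving (coface) map. -/
def toTrunc (n : ℕ) : NEP n ⥤ SimplexCategory.Truncated n where
  obj T := ⟨SimplexCategory.mk (T.1.card - 1), by
    have h1 : T.1.card ≤ n + 1 := by
      simpa using Finset.card_le_univ T.1
    simp only [SimplexCategory.len_mk]
    omega⟩
  map {T T'} f := ObjectProperty.homMk (SimplexCategory.mkHom (truncHom (leOfHom f)))
  map_id T := by
    apply ObjectProperty.hom_ext
    apply SimplexCategory.Hom.ext
    ext i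
    simp only [truncHom, restrictEmb_refl, SimplexCategory.mkHom,
      SimplexCategory.Hom.toOrderHom_mk, OrderHom.coe_mk, Fin.coe_cast]
    rfl
  map_comp {T T' T''} f g := by
    apply ObjectProperty.hom_ext
    apply SimplexCategory.Hom.ext
    apply OrderHom.ext
    funext i
    show (truncHom (leOfHom (f ≫ g))) i = (truncHom (leOfHom g)) ((truncHom (leOfHom f)) i)
    show Fin.cast (Nat.succ_pred_eq_of_pos T''.2.card_pos).symm
        (restrictEmb (leOfHom (f ≫ g)) (Fin.cast (Nat.succ_pred_eq_of_pos T.2.card_pos) i)) =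
      Fin.cast (Nat.succ_pred_eq_of_pos T''.2.card_pos).symm
        (restrictEmb (leOfHom g) (Fin.cast (Nat.succ_pred_eq_of_pos T'.2.card_pos)
          (Fin.cast (Nat.succ_pred_eq_of_pos T'.2.card_pos).symm
            (restrictEmb (leOfHom f) (Fin.cast (Nat.succ_pred_eq_of_pos T.2.card_pos) i)))))
    rw [show Fin.cast (Nat.succ_pred_eq_of_pos T'.2.card_pos)
        (Fin.cast (Nat.succ_pred_eq_of_pos T'.2.card_pos).symm
          (restrictEmb (leOfHom f) (Fin.cast (Nat.succ_pred_eq_of_pos T.2.card_pos) i))) =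
        restrictEmb (leOfHom f) (Fin.cast (Nat.succ_pred_eq_of_pos T.2.card_pos) i) from by
      apply Fin.ext; simp]
    rw [restrictEmb_trans (leOfHom f) (leOfHom g) (leOfHom (f ≫ g))]

section Contractibility

/-- every simplex of the standard `0`-simplex is the iterated degeneracy of the
point -/
instance (m : SimplexCategoryᵒᵖ) : Subsingleton ((Δ[0] : SSet.{0}).obj m) :=
  ⟨fun a b => by
    apply (SSet.stdSimplex.objEquiv).injective
    apply SimplexCategory.Hom.ext
    apply OrderHom.ext
    funext x
    exact Subsingleton.elim (α := Fin 1) _ _⟩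

/-- the unique map to the point `Δ[0]` -/
def toPt (X : SSet.{0}) : X ⟶ Δ[0] where
  app m := TypeCat.ofHom fun _ => SSet.stdSimplex.objMk (OrderHom.const _ 0)
  naturality _ _ _ := by
    ext
    apply Subsingleton.elim

/-- the two vertices `Δ[0] ⟶ Δ[1]` -/
def vtx (i : Fin 2) : (Δ[0] : SSet.{0}) ⟶ Δ[1] :=
  SSet.stdSimplex.map
    (SimplexCategory.const (SimplexCategory.mk 0) (SimplexCategory.mk 1) i)

/-- the inclusion `X ⟶ X × Δ[1]` at the vertex `i` of the simplicial cylinder -/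
noncomputable def cylIncl (X : SSet.{0}) (i : Fin 2) : X ⟶ Limits.prod X Δ[1] :=
  Limits.prod.lift (𝟙 X) (toPt X ≫ vtx i)

/-- an (elementary) simplicial homotopy `X × Δ[1] ⟶ Y` from `f` to `g` -/
def SHomotopy {X Y : SSet.{0}} (f g : X ⟶ Y) : Prop :=
  ∃ H : Limits.prod X Δ[1] ⟶ Y, cylIncl X 0 ≫ H = f ∧ cylIncl X 1 ≫ H = g

/-- maps of simplicial sets connected by a zigzag of elementary simplicial
homotopies -/
def SHomotopicZigzag {X Y : SSet.{0}} : (X ⟶ Y) → (X ⟶ Y) → Prop :=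
  Relation.ReflTransGen fun f g => SHomotopy f g ∨ SHomotopy g f

/-- a simplicial set is contractible if it is simplicially homotopy equivalent
to the point `Δ[0]` -/
def SContractible (X : SSet.{0}) : Prop :=
  ∃ (s : Δ[0] ⟶ X) (r : X ⟶ Δ[0]),
    SHomotopicZigzag (r ≫ s) (𝟙 X) ∧ s ≫ r = 𝟙 Δ[0]

/-- a functor is left cofinal (homotopy initial) — so that restriction along it
preserves homotopy limits — if each of the comma categories `(F ↓ d)` has a
contractible nerve -/
def HomotopyInitial {C D : Type} [Category.{0} C] [Category.{0} D] (F : C ⥤ D) : Prop :=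
  ∀ d : D, SContractible (CategoryTheory.nerve (CostructuredArrow F d))

end Contractibility

/-!
An object of the comma category `toTrunc n ↓ [m]` is a nonempty `T ⊆ [n]` together with a
monotone map `T → [m]`, so it is determined by its graph, a nonempty clique of the relation
`MonotoneCompatible` on `[n] × [m]`. Passing to graphs and back exhibits the comma category as
a retract, up to a natural transformation, of the face poset of this flag complex, and natural
transformations induce simplicial homotopies of nerves; so it suffices to connect the identity
of the face poset to a constant map by pointwise comparable monotone maps.

Contiguous vertex maps `f` and `g` give such a zigzag `f S ⊆ f S ∪ g S ⊇ g S`. The maps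
`pushDiag v`, which move each point `(a, b)` with `b < v` and `b < a` to `(b, b)`, form a chain
of contiguous maps from the identity (`v = 0`) to a map with image in `{a ≤ b}`, and every
point there is compatible with the apex `(m, m)`, a point of `[n] × [m]` because `m ≤ n`.
-/

section NerveHomotopy

variable {C D : Type} [Category.{0} C] [Category.{0} D]

/-- With `f` and `g` the projections of `nerve C ⨯ Δ[1]`, this is the simplicial homotopy of `α`
viewed as a functor `Fin 2 × C ⥤ D`; allowing arbitrary `f` and `g` makes precomposition with
the cylinder inclusions a definitional computation. -/
noncomputable def natTransHomotopyOn {X : SSet.{0}} {F G : C ⥤ D} (α : F ⟶ G)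
    (f : X ⟶ nerve C) (g : X ⟶ Δ[1]) : X ⟶ nerve D where
  app m := TypeCat.ofHom fun x =>
    (SSet.stdSimplex.asOrderHom (g.app m x)).toFunctor.prod' (f.app m x) ⋙
      Functor.uncurry.obj (ComposableArrows.mk₁ α)
  naturality m m' θ := by
    ext x
    have hf := ConcreteCategory.congr_hom (f.naturality θ) x
    have hg := ConcreteCategory.congr_hom (g.naturality θ) x
    rw [ConcreteCategory.comp_apply, ConcreteCategory.comp_apply] at hf hg
    change (SSet.stdSimplex.asOrderHom (g.app m' (X.map θ x))).toFunctor.prod'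
      (f.app m' (X.map θ x)) ⋙ _ = (nerve D).map θ (_ ⋙ _)
    rw [hf, hg]
    rfl

lemma comp_natTransHomotopyOn {X Y : SSet.{0}} {F G : C ⥤ D} (α : F ⟶ G) (h : Y ⟶ X)
    (f : X ⟶ nerve C) (g : X ⟶ Δ[1]) :
    h ≫ natTransHomotopyOn α f g = natTransHomotopyOn α (h ≫ f) (h ≫ g) := rfl

lemma prod'_const_comp_uncurry {J : Type} [Category.{0} J] (x : J ⥤ C) (K : Fin 2 ⥤ C ⥤ D)
    (i : Fin 2) : ((Functor.const J).obj i).prod' x ⋙ Functor.uncurry.obj K = x ⋙ K.obj i :=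
  CategoryTheory.Functor.ext (fun _ => rfl) (fun _ _ _ => by simp)

lemma natTransHomotopyOn_vertex {F G : C ⥤ D} (α : F ⟶ G) (i : Fin 2) :
    natTransHomotopyOn α (𝟙 (nerve C)) (toPt _ ≫ vtx i) =
      nerveMap ((ComposableArrows.mk₁ α).obj i) := by
  apply NatTrans.ext
  funext m
  ext : 2
  funext x
  have hconst : (SSet.stdSimplex.asOrderHom ((toPt _ ≫ vtx i).app m x)).toFunctor =
      (Functor.const _).obj i :=
    CategoryTheory.Functor.ext (fun _ => rfl) (fun _ _ _ => Subsingleton.elim _ _)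
  change (SSet.stdSimplex.asOrderHom ((toPt _ ≫ vtx i).app m x)).toFunctor.prod' x ⋙ _ = _
  rw [hconst]
  exact prod'_const_comp_uncurry (J := Fin _) x _ i

lemma sHomotopy_nerveMap {F G : C ⥤ D} (α : F ⟶ G) : SHomotopy (nerveMap F) (nerveMap G) := by
  refine ⟨natTransHomotopyOn α Limits.prod.fst Limits.prod.snd, ?_, ?_⟩ <;>
  · rw [comp_natTransHomotopyOn, cylIncl, Limits.prod.lift_fst, Limits.prod.lift_snd,
      natTransHomotopyOn_vertex]
    rfl

end NerveHomotopy

section NatTransZigzag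

variable {C D : Type} [Category.{0} C] [Category.{0} D]

def NatTransZigzag : (C ⥤ D) → (C ⥤ D) → Prop :=
  Relation.ReflTransGen (Relation.SymmGen fun F G => Nonempty (F ⟶ G))

lemma NatTransZigzag.symm {F G : C ⥤ D} (h : NatTransZigzag F G) : NatTransZigzag G F :=
  Relation.ReflTransGen.stdSymm.symm _ _ h

lemma NatTransZigzag.whisker {F G : C ⥤ D} (h : NatTransZigzag F G) {B E : Type}
    [Category.{0} B] [Category.{0} E] (V : B ⥤ C) (W : D ⥤ E) :
    NatTransZigzag (V ⋙ F ⋙ W) (V ⋙ G ⋙ W) :=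
  h.lift (fun F => V ⋙ F ⋙ W) fun _ _ r =>
    r.imp (fun ⟨α⟩ => ⟨Functor.whiskerLeft V (Functor.whiskerRight α W)⟩)
      (fun ⟨α⟩ => ⟨Functor.whiskerLeft V (Functor.whiskerRight α W)⟩)

lemma NatTransZigzag.of_le {P Q : Type} [Preorder P] [Preorder Q] {φ ψ : P →o Q}
    (h : φ ≤ ψ) :
    NatTransZigzag φ.toFunctor ψ.toFunctor :=
  .single (.inl ⟨OrderHom.equivalenceFunctor.functor.map (homOfLE h)⟩)

lemma NatTransZigzag.of_ge {P Q : Type} [Preorder P] [Preorder Q] {φ ψ : P →o Q}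
    (h : ψ ≤ φ) :
    NatTransZigzag φ.toFunctor ψ.toFunctor :=
  (of_le h).symm

lemma NatTransZigzag.sHomotopicZigzag {F G : C ⥤ D} (h : NatTransZigzag F G) :
    SHomotopicZigzag (nerveMap F) (nerveMap G) :=
  h.lift _ fun _ _ r =>
    r.imp (fun ⟨α⟩ => sHomotopy_nerveMap α) (fun ⟨α⟩ => sHomotopy_nerveMap α)

lemma natTransZigzag_id_const_of_unit {P : Type} [Category.{0} P] (V : C ⥤ P) (W : P ⥤ C)
    (η : 𝟭 C ⟶ V ⋙ W) (p : P) (h : NatTransZigzag (𝟭 P) ((Functor.const P).obj p)) :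
    NatTransZigzag (𝟭 C) ((Functor.const C).obj (W.obj p)) :=
  .head (.inl ⟨η⟩) ((h.whisker V W).tail (.inl ⟨(Functor.constComp C p W).hom⟩))

lemma sContractible_nerve_of_natTransZigzag (c : C)
    (h : NatTransZigzag (𝟭 C) ((Functor.const C).obj c)) : SContractible (nerve C) :=
  ⟨SSet.const (nerveEquiv.symm c), toPt _, h.symm.sHomotopicZigzag, by
    apply NatTrans.ext
    funext m
    ext x
    exact Subsingleton.elim _ _⟩

end NatTransZigzag

section Clique

variable {α : Type} (r : α → α → Prop)

/-- The face poset of the flag complex of `r`. -/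
def CliqueFace : Type := {S : Finset α // S.Nonempty ∧ ∀ p ∈ S, ∀ q ∈ S, r p q}

instance : PartialOrder (CliqueFace r) := by unfold CliqueFace; infer_instance

/-- For `f = g` this says that `f` is a simplicial map of the flag complex of `r`. -/
def Contiguous (f g : α → α) : Prop := ∀ p q, r p q → r (f p) (g q)

variable {r}

namespace CliqueFace

variable [DecidableEq α] [Std.Symm r]

def image (f : α → α) (hf : Contiguous r f f) : CliqueFace r →o CliqueFace r where
  toFun S := ⟨S.1.image f, S.2.1.image f, by
    simp only [Finset.forall_mem_image]
    exact fun p hp q hq => hf p q (S.2.2 p hp q hq)⟩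
  monotone' _ _ h := Finset.image_subset_image h

def imageUnion (f g : α → α) (hf : Contiguous r f f) (hg : Contiguous r g g)
    (hfg : Contiguous r f g) : CliqueFace r →o CliqueFace r where
  toFun S := ⟨S.1.image f ∪ S.1.image g, (S.2.1.image f).mono Finset.subset_union_left, by
    simp only [Finset.mem_union, Finset.mem_image]
    rintro _ (⟨p, hp, rfl⟩ | ⟨p, hp, rfl⟩) _ (⟨q, hq, rfl⟩ | ⟨q, hq, rfl⟩)
    · exact hf p q (S.2.2 p hp q hq)
    · exact hfg p q (S.2.2 p hp q hq)
    · exact Std.Symm.symm _ _ (hfg q p (S.2.2 q hq p hp))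
    · exact hg p q (S.2.2 p hp q hq)⟩
  monotone' _ _ h := Finset.union_subset_union (Finset.image_subset_image h)
    (Finset.image_subset_image h)

def singleton (c : α) (hc : r c c) : CliqueFace r :=
  ⟨{c}, Finset.singleton_nonempty c, by simpa using hc⟩

lemma natTransZigzag_image {f g : α → α} (hf : Contiguous r f f)
    (hg : Contiguous r g g) (hfg : Contiguous r f g) :
    NatTransZigzag (image f hf).toFunctor (image g hg).toFunctor :=
  (NatTransZigzag.of_le (ψ := imageUnion f g hf hg hfg) fun _ => Finset.subset_union_left).trans
    (NatTransZigzag.of_ge fun _ => Finset.subset_union_right)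

lemma natTransZigzag_id_const (f : ℕ → α → α) (hf : ∀ i, Contiguous r (f i) (f i))
    (hsucc : ∀ i, Contiguous r (f i) (f (i + 1))) (hf₀ : f 0 = id) (k : ℕ) (c : α)
    (hc : r c c) (hfc : Contiguous r (f k) fun _ => c) :
    NatTransZigzag (𝟭 (CliqueFace r)) ((Functor.const _).obj (singleton c hc)) := by
  have hid : NatTransZigzag (𝟭 (CliqueFace r)) (image (f 0) (hf 0)).toFunctor :=
    NatTransZigzag.of_le (φ := OrderHom.id) fun S p hp =>
      Finset.mem_image.2 ⟨p, hp, by rw [hf₀]; rfl⟩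
  have hchain (j : ℕ) :
      NatTransZigzag (image (f 0) (hf 0)).toFunctor (image (f j) (hf j)).toFunctor := by
    induction j with
    | zero => exact .refl
    | succ j ih => exact ih.trans (natTransZigzag_image (hf j) (hf (j + 1)) (hsucc j))
  have hconst : NatTransZigzag (image (f k) (hf k)).toFunctor
      (image (fun _ => c) fun _ _ _ => hc).toFunctor :=
    natTransZigzag_image (hf k) _ hfc
  exact ((hid.trans (hchain k)).trans hconst).trans
    (NatTransZigzag.of_le (ψ := OrderHom.const _ (singleton c hc)) fun S =>
      (Finset.image_const S.2.1 c).subset)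

end CliqueFace

end Clique

section Grid

variable {A B : Type} [Preorder A] [Preorder B]

/-- The cliques of this relation are exactly the graphs of monotone partial maps `A → B`. -/
def MonotoneCompatible (p q : A × B) : Prop :=
  (p.1 ≤ q.1 → p.2 ≤ q.2) ∧ (q.1 ≤ p.1 → q.2 ≤ p.2)

instance : Std.Symm (MonotoneCompatible (A := A) (B := B)) := ⟨fun _ _ h => h.symm⟩

lemma monotoneCompatible_refl (p : A × B) : MonotoneCompatible p p :=
  ⟨fun _ => le_rfl, fun _ => le_rfl⟩

variable (A B) in
abbrev GraphFace : Type := CliqueFace (MonotoneCompatible (A := A) (B := B))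

variable {n m : ℕ}

def pushDiag (v : ℕ) (p : Fin (n + 1) × Fin (m + 1)) : Fin (n + 1) × Fin (m + 1) :=
  if h : (p.2 : ℕ) < v ∧ (p.2 : ℕ) < p.1 then (⟨p.2, h.2.trans p.1.2⟩, p.2) else p

lemma pushDiag_zero : pushDiag 0 = (id : Fin (n + 1) × Fin (m + 1) → _) := by
  funext p; simp [pushDiag]

lemma contiguous_pushDiag {v w : ℕ} (hvw : v ≤ w) (hwv : w ≤ v + 1) :
    Contiguous MonotoneCompatible (pushDiag (n := n) (m := m) v) (pushDiag w) := by
  rintro ⟨a, b⟩ ⟨a', b'⟩ ⟨h1, h2⟩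
  simp only [pushDiag, MonotoneCompatible, Fin.le_def] at *
  split_ifs <;> simp only at * <;> omega

lemma contiguous_pushDiag_const (hmn : m ≤ n) :
    Contiguous MonotoneCompatible (pushDiag (n := n) (m + 1))
      (fun _ => (⟨m, by omega⟩, Fin.last m)) := by
  rintro ⟨a, b⟩ ⟨a', b'⟩ -
  simp only [pushDiag, MonotoneCompatible, Fin.le_def, Fin.val_last] at *
  split_ifs <;> simp only at * <;> omega

def diagApex (hmn : m ≤ n) : GraphFace (Fin (n + 1)) (Fin (m + 1)) :=
  CliqueFace.singleton (⟨m, by omega⟩, Fin.last m) (monotoneCompatible_refl _)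

theorem natTransZigzag_id_const_diagApex (hmn : m ≤ n) :
    NatTransZigzag (𝟭 _) ((Functor.const _).obj (diagApex hmn)) :=
  CliqueFace.natTransZigzag_id_const pushDiag (fun _ => contiguous_pushDiag le_rfl (by omega))
    (fun _ => contiguous_pushDiag (by omega) le_rfl) pushDiag_zero (m + 1) _ _
    (contiguous_pushDiag_const hmn)

end Grid

section GraphValue

variable {A B : Type} [Preorder A] [DecidableEq A] [SemilatticeSup B] [OrderBot B]

namespace GraphFace

noncomputable def valueAt (S : GraphFace A B) (t : A) : B :=
  (S.1.filter (·.1 = t)).sup Prod.snd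

lemma valueAt_eq (S : GraphFace A B) {t : A} {w : B} (h : (t, w) ∈ S.1) :
    S.valueAt t = w := by
  refine le_antisymm (Finset.sup_le fun p hp => ?_) ?_
  · rw [Finset.mem_filter] at hp
    exact (S.2.2 p hp.1 _ h).1 hp.2.le
  · exact Finset.le_sup (f := Prod.snd) (s := S.1.filter fun p => p.1 = t)
      (Finset.mem_filter.2 ⟨h, rfl⟩)

lemma valueAt_eq_of_le {S T : GraphFace A B} (hST : S ≤ T) {t : A}
    (ht : t ∈ S.1.image Prod.fst) : T.valueAt t = S.valueAt t := by
  obtain ⟨⟨t, w⟩, hw, rfl⟩ := Finset.mem_image.1 ht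
  rw [S.valueAt_eq hw, T.valueAt_eq (hST hw)]

noncomputable def graphFun (S : GraphFace A B) : S.1.image Prod.fst →o B where
  toFun t := S.valueAt t
  monotone' := by
    rintro ⟨_, ht⟩ ⟨_, hu⟩ htu
    obtain ⟨⟨t, w⟩, hw, rfl⟩ := Finset.mem_image.1 ht
    obtain ⟨⟨u, w'⟩, hw', rfl⟩ := Finset.mem_image.1 hu
    simp only [S.valueAt_eq hw, S.valueAt_eq hw']
    exact (S.2.2 _ hw _ hw').1 htu

end GraphFace

end GraphValue

section CommaCategory

variable {n : ℕ}

def NEP.orderIso (T : NEP n) : Fin (T.1.card - 1 + 1) ≃o T.1 :=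
  (Fin.castOrderIso (Nat.succ_pred_eq_of_pos T.2.card_pos)).trans (T.1.orderIsoOfFin rfl)

lemma NEP.orderIso_truncHom {T T' : NEP n} (h : T.1 ⊆ T'.1) (k : Fin (T.1.card - 1 + 1)) :
    (T'.orderIso (truncHom h k) : Fin (n + 1)) = T.orderIso k := by
  have hcast : Fin.castOrderIso (Nat.succ_pred_eq_of_pos T'.2.card_pos) (truncHom h k) =
      restrictEmb h (Fin.castOrderIso (Nat.succ_pred_eq_of_pos T.2.card_pos) k) :=
    Fin.ext rfl
  rw [NEP.orderIso, NEP.orderIso, OrderIso.trans_apply, OrderIso.trans_apply, hcast,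
    Finset.coe_orderIsoOfFin_apply, Finset.coe_orderIsoOfFin_apply]
  exact orderEmbOfFin_symm_apply _ _

variable {d : SimplexCategory.Truncated n}

def arrowMap (X : CostructuredArrow (toTrunc n) d) : X.left.1 →o Fin (d.obj.len + 1) where
  toFun t := X.hom.hom.toOrderHom (X.left.orderIso.symm t)
  monotone' := X.hom.hom.toOrderHom.monotone.comp X.left.orderIso.symm.monotone

lemma arrowMap_orderIso (X : CostructuredArrow (toTrunc n) d)
    (k : Fin (X.left.1.card - 1 + 1)) :
    arrowMap X (X.left.orderIso k) = X.hom.hom.toOrderHom k := by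
  simp [arrowMap]

lemma arrowMap_eq_of_hom {X Y : CostructuredArrow (toTrunc n) d} (φ : X ⟶ Y) (t : X.left.1) :
    arrowMap Y ⟨t, leOfHom φ.left t.2⟩ = arrowMap X t := by
  obtain ⟨k, rfl⟩ := X.left.orderIso.surjective t
  have ht : (⟨X.left.orderIso k, leOfHom φ.left (X.left.orderIso k).2⟩ : Y.left.1) =
      Y.left.orderIso (truncHom (leOfHom φ.left) k) :=
    Subtype.ext (NEP.orderIso_truncHom _ k).symm
  rw [ht, arrowMap_orderIso, arrowMap_orderIso, ← CostructuredArrow.w φ]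
  rfl

def homMkOfArrowMap {X Y : CostructuredArrow (toTrunc n) d} (h : X.left.1 ⊆ Y.left.1)
    (heq : ∀ t : X.left.1, arrowMap Y ⟨t, h t.2⟩ = arrowMap X t) : X ⟶ Y :=
  CostructuredArrow.homMk (homOfLE (show X.left ≤ Y.left from h)) (by
    apply ObjectProperty.hom_ext
    apply SimplexCategory.Hom.ext
    ext k : 2
    change Y.hom.hom.toOrderHom (truncHom h k) = _
    rw [← arrowMap_orderIso, ← arrowMap_orderIso X k, ← heq]
    exact congrArg _ (Subtype.ext (NEP.orderIso_truncHom h k)))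

def graph (X : CostructuredArrow (toTrunc n) d) :
    GraphFace (Fin (n + 1)) (Fin (d.obj.len + 1)) :=
  ⟨X.left.1.attach.image fun t => (t.1, arrowMap X t), X.left.2.attach.image _, by
    simp only [Finset.forall_mem_image]
    exact fun t _ u _ => ⟨fun h => (arrowMap X).monotone h, fun h => (arrowMap X).monotone h⟩⟩

lemma mem_graph (X : CostructuredArrow (toTrunc n) d) (t : X.left.1) :
    (t.1, arrowMap X t) ∈ (graph X).1 :=
  Finset.mem_image_of_mem _ (Finset.mem_attach _ t)

def toGraph :
    CostructuredArrow (toTrunc n) d ⥤ GraphFace (Fin (n + 1)) (Fin (d.obj.len + 1)) where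
  obj := graph
  map {X Y} φ := homOfLE (by
    rintro _ hp
    obtain ⟨t, -, rfl⟩ := Finset.mem_image.1 hp
    rw [← arrowMap_eq_of_hom φ t]
    exact mem_graph Y ⟨t, _⟩)

noncomputable def ofGraph (S : GraphFace (Fin (n + 1)) (Fin (d.obj.len + 1))) :
    CostructuredArrow (toTrunc n) d :=
  CostructuredArrow.mk (Y := (⟨S.1.image Prod.fst, S.2.1.image _⟩ : NEP n))
    (ObjectProperty.homMk (SimplexCategory.mkHom
      (S.graphFun.comp (NEP.orderIso ⟨S.1.image Prod.fst, S.2.1.image _⟩ : _ →o _))))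

lemma arrowMap_ofGraph (S : GraphFace (Fin (n + 1)) (Fin (d.obj.len + 1)))
    (t : (ofGraph S).left.1) : arrowMap (ofGraph S) t = S.valueAt t := by
  change S.graphFun (NEP.orderIso _ ((NEP.orderIso _).symm t)) = _
  rw [OrderIso.apply_symm_apply]
  rfl

noncomputable def ofGraphFunctor :
    GraphFace (Fin (n + 1)) (Fin (d.obj.len + 1)) ⥤ CostructuredArrow (toTrunc n) d where
  obj := ofGraph
  map h := homMkOfArrowMap (Finset.image_subset_image h.le) fun t =>
    (arrowMap_ofGraph _ _).trans
      ((GraphFace.valueAt_eq_of_le h.le t.2).trans (arrowMap_ofGraph _ _).symm)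

noncomputable def graphUnit :
    𝟭 (CostructuredArrow (toTrunc n) d) ⟶ toGraph ⋙ ofGraphFunctor where
  app X := homMkOfArrowMap (fun t ht => Finset.mem_image_of_mem Prod.fst (mem_graph X ⟨t, ht⟩))
    fun t => (arrowMap_ofGraph _ _).trans (GraphFace.valueAt_eq _ (mem_graph X t))

end CommaCategory

/-- For each `n ≥ 0`, the composite functor
`𝒫₀([n]) ≅ PΔ[n] ⟶ Δ_res^{≤n} ⊂ Δ^{≤n}` — sending a nonempty subset `T ⊆ [n]`
(equivalently, the non-degenerate simplex of `Δ[n]` it spans) to `[|T| − 1]`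
and an inclusion to the corresponding injective order-preserving map — is left
cofinal (homotopy initial): every comma category over it has contractible
nerve, so restriction along it preserves homotopy limits. -/
theorem statement_13 (n : ℕ) : HomotopyInitial (toTrunc n) := fun d =>
  sContractible_nerve_of_natTransZigzag _ (natTransZigzag_id_const_of_unit toGraph
    ofGraphFunctor graphUnit _ (natTransZigzag_id_const_diagApex d.property))

end StabilizationPaper
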